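/- arXiv:2212.01360 — 4 statements merged into one kernel-verified Lean document; each statement's English description precedes it below -/
import Mathlib

section
/- Let A be an abelian group and H ≤ A a subgroup of finite index. Suppose d₀ is a translation-invariant metric on H (i.e. d₀(x+h, y+h) = d₀(x, y) for all x, y, h ∈ H) such that (H, d₀) is a compact metric space. Then there exists a translation-invariant metric d on A (i.e. d(x+a, y+a) = d(x, y) for all x, y, a ∈ A) whose restriction to H × H equals d₀ and such that (A, d) is a compact metric space. -/
theorem ueda_aux_compact {ι X Y : Type*} [Finite ι] [MetricSpace X] [CompactSpace X]
    [MetricSpace Y] (f : ι → X → Y)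
    (hf : ∀ (i : ι) (x x' : X), dist (f i x) (f i x') = dist x x')
    (hsurj : ∀ y : Y, ∃ i x, f i x = y) : CompactSpace Y := by
  rw [← isCompact_univ_iff]
  have hcover : (Set.univ : Set Y) = ⋃ i, f i '' Set.univ := by
    ext y
    simp only [Set.mem_univ, Set.mem_iUnion, Set.mem_image, true_iff]
    obtain ⟨i, x, hx⟩ := hsurj y
    exact ⟨i, x, trivial, hx⟩
  rw [hcover]
  exact isCompact_iUnion fun i =>
    isCompact_univ.image (Isometry.of_dist_eq (hf i)).continuous

/-- Let `A` be an abelian group and `H ≤ A` a subgroup of finite index.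
Suppose `d₀` is a translation-invariant metric on `H` making `H` a compact metric space.
Then there exists a translation-invariant metric `d` on `A` whose restriction to `H × H`
equals `d₀`, making `A` a compact metric space. -/
theorem ueda_invariant_metric_extension
    {A : Type*} [AddCommGroup A] (H : AddSubgroup A) [H.FiniteIndex]
    (d₀ : MetricSpace H)
    (hinv₀ : ∀ x y h : H, d₀.dist (x + h) (y + h) = d₀.dist x y)
    (hcompact₀ : @CompactSpace H d₀.toUniformSpace.toTopologicalSpace) :
    ∃ d : MetricSpace A,
      (∀ x y a : A, d.dist (x + a) (y + a) = d.dist x y) ∧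
      (∀ x y : H, d.dist (x : A) (y : A) = d₀.dist x y) ∧
      @CompactSpace A d.toUniformSpace.toTopologicalSpace := by
  classical
  letI := d₀
  haveI := hcompact₀
  -- translation invariance gives: dist x y = dist (x - y) 0
  have hsub : ∀ x y : H, dist x y = dist (x - y) (0 : H) := by
    intro x y
    simpa using hinv₀ (x - y) 0 y
  -- boundedness of the norm on H
  obtain ⟨r, hr⟩ := isCompact_univ.isBounded.subset_closedBall (0 : H)
  set C : ℝ := max r 1 with hC
  have hC1 : (1 : ℝ) ≤ C := le_max_right _ _
  have hCb : ∀ h : H, dist h (0 : H) ≤ C := fun h =>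
    le_trans (Metric.mem_closedBall.mp (hr (Set.mem_univ h))) (le_max_left _ _)
  -- the extended norm
  set ρ : A → ℝ := fun a => if h : a ∈ H then dist (⟨a, h⟩ : H) (0 : H) else C with hρ
  have hρH : ∀ (a : A) (h : a ∈ H), ρ a = dist (⟨a, h⟩ : H) (0 : H) := by
    intro a h; simp [hρ, h]
  have hρH' : ∀ h : H, ρ (h : A) = dist h (0 : H) := by
    intro h; rw [hρH _ h.2]
  have hρnotH : ∀ a : A, a ∉ H → ρ a = C := by
    intro a h; simp [hρ, h]
  have hρ_nonneg : ∀ a : A, 0 ≤ ρ a := by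
    intro a
    by_cases h : a ∈ H
    · rw [hρH a h]; exact dist_nonneg
    · rw [hρnotH a h]; linarith
  have hρ_zero : ρ 0 = 0 := by
    have : ρ ((0 : H) : A) = dist (0 : H) (0 : H) := hρH' 0
    simpa using this
  have hρ_neg : ∀ a : A, ρ (-a) = ρ a := by
    intro a
    by_cases h : a ∈ H
    · rw [hρH a h, hρH (-a) (neg_mem h)]
      have h1 : (⟨-a, neg_mem h⟩ : H) = -⟨a, h⟩ := rfl
      rw [h1]
      have := hinv₀ (-⟨a, h⟩) 0 ⟨a, h⟩
      simpa [dist_comm] using this.symm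
    · rw [hρnotH a h, hρnotH (-a) (fun hh => h (by simpa using neg_mem hh))]
  have hρ_bound : ∀ a : A, ρ a ≤ C := by
    intro a
    by_cases h : a ∈ H
    · rw [hρH a h]; exact hCb _
    · rw [hρnotH a h]
  have hρ_add : ∀ a b : A, ρ (a + b) ≤ ρ a + ρ b := by
    intro a b
    by_cases ha : a ∈ H
    · by_cases hb : b ∈ H
      · rw [hρH a ha, hρH b hb, hρH (a + b) (add_mem ha hb)]
        have h1 : (⟨a + b, add_mem ha hb⟩ : H) = ⟨a, ha⟩ + ⟨b, hb⟩ := rfl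
        rw [h1]
        calc dist (⟨a, ha⟩ + ⟨b, hb⟩ : H) 0
            ≤ dist (⟨a, ha⟩ + ⟨b, hb⟩ : H) ⟨b, hb⟩ + dist (⟨b, hb⟩ : H) 0 :=
              dist_triangle _ _ _
          _ = dist (⟨a, ha⟩ : H) 0 + dist (⟨b, hb⟩ : H) 0 := by
              have := hinv₀ ⟨a, ha⟩ 0 ⟨b, hb⟩
              rw [zero_add] at this; rw [this]
      · have hab : a + b ∉ H := fun hh => hb (by simpa using sub_mem hh ha)
        rw [hρnotH _ hab, hρnotH b hb]
        have := hρ_nonneg a; linarith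
    · by_cases hb : b ∈ H
      · have hab : a + b ∉ H := fun hh => ha (by simpa using sub_mem hh hb)
        rw [hρnotH _ hab, hρnotH a ha]
        have := hρ_nonneg b; linarith
      · rw [hρnotH a ha, hρnotH b hb]
        have := hρ_bound (a + b); linarith
  have hρ_eq_zero : ∀ a : A, ρ a = 0 → a = 0 := by
    intro a h
    by_cases hmem : a ∈ H
    · rw [hρH a hmem] at h
      have : (⟨a, hmem⟩ : H) = 0 := dist_eq_zero.mp h
      simpa using congrArg (Subtype.val) this
    · rw [hρnotH a hmem] at h; linarith
  -- build the metric
  letI dA : PseudoMetricSpace A :=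
    { dist := fun x y => ρ (x - y)
      dist_self := fun x => by simp [hρ_zero]
      dist_comm := fun x y => by
        show ρ (x - y) = ρ (y - x)
        rw [← neg_sub x y, hρ_neg]
      dist_triangle := fun x y z => by
        show ρ (x - z) ≤ ρ (x - y) + ρ (y - z)
        have h3 : x - z = (x - y) + (y - z) := by abel
        rw [h3]; exact hρ_add _ _ }
  letI d : MetricSpace A :=
    { toPseudoMetricSpace := dA
      eq_of_dist_eq_zero := fun {x y} h => sub_eq_zero.mp (hρ_eq_zero _ h) }
  letI : MetricSpace H := d₀
  haveI := hcompact₀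
  refine ⟨d, ?_, ?_, ?_⟩
  · intro x y a
    show ρ (x + a - (y + a)) = ρ (x - y)
    congr 1; abel
  · intro x y
    show ρ ((x : A) - (y : A)) = d₀.dist x y
    have hmem : (x : A) - (y : A) ∈ H := sub_mem x.2 y.2
    rw [hρH _ hmem]
    have h1 : (⟨(x : A) - (y : A), hmem⟩ : H) = x - y := rfl
    rw [h1, ← hsub]
  · -- compactness
    haveI : Finite (A ⧸ H) := H.finite_quotient_of_finiteIndex
    refine @ueda_aux_compact (A ⧸ H) H A _ d₀ hcompact₀ d
      (fun q h => Quotient.out q + (h : A)) ?_ ?_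
    · intro q h h'
      show ρ (Quotient.out q + (h : A) - (Quotient.out q + (h' : A))) = d₀.dist h h'
      have he : Quotient.out q + (h : A) - (Quotient.out q + (h' : A)) =
          (h : A) - (h' : A) := by abel
      rw [he]
      have hmem : (h : A) - (h' : A) ∈ H := sub_mem h.2 h'.2
      rw [hρH _ hmem]
      have h1 : (⟨(h : A) - (h' : A), hmem⟩ : H) = h - h' := rfl
      rw [h1, ← hsub]
    · intro a
      have hmem : -(Quotient.out (QuotientAddGroup.mk a : A ⧸ H)) + a ∈ H := by
        rw [← QuotientAddGroup.eq]
        exact QuotientAddGroup.out_eq' _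
      exact ⟨QuotientAddGroup.mk a, ⟨_, hmem⟩, by simp⟩
end

section
/- The map sending a group homomorphism ρ : Λ → U(1) to the class of c(s) in ℂ^d / Λ_c, where s = (s_1, …, s_{2d}) ∈ (iℝ)^{2d} is any vector of purely imaginary complex numbers with exp(s_k) = ρ(λ_k) for k = 1, …, 2d, is well defined (independent of the choice of the logarithms s_k) and is an isomorphism of abelian groups from Hom(Λ, U(1)) (with pointwise multiplication) onto the quotient group ℂ^d / Λ_c. -/
/-- The real `(2d)×(2d)` matrix `A_Λ` whose `k`-th row is
`(Re((λ_k)_1), …, Re((λ_k)_d), Im((λ_k)_1), …, Im((λ_k)_d))`. -/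
noncomputable def AΛ (d : ℕ) (lam : Fin (d + d) → Fin d → ℂ) :
    Matrix (Fin (d + d)) (Fin (d + d)) ℝ :=
  fun k j =>
    Fin.addCases (motive := fun _ => ℝ) (fun i => (lam k i).re) (fun i => (lam k i).im) j

/-- The `ℝ`-linear map `B(a_1,…,a_d,b_1,…,b_d) := ((a_1 + i b_1)/2, …, (a_d + i b_d)/2)`. -/
noncomputable def Bmap (d : ℕ) (v : Fin (d + d) → ℝ) : Fin d → ℂ :=
  fun j => ((v (Fin.castAdd d j) : ℂ) + Complex.I * (v (Fin.natAdd d j) : ℂ)) / 2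

/-- For a vector `s` of purely imaginary complex numbers, `c(s) := i·B(A_Λ⁻¹(−i s)) ∈ ℂ^d`. -/
noncomputable def cmap (d : ℕ) (lam : Fin (d + d) → Fin d → ℂ)
    (s : Fin (d + d) → ℂ) : Fin d → ℂ :=
  fun j => Complex.I *
    Bmap d ((AΛ d lam)⁻¹.mulVec (fun k => ((-Complex.I) * s k).re)) j

/-- The lattice `Λ := ℤλ_1 + ⋯ + ℤλ_{2d}`, as an additive subgroup of `ℂ^d`. -/
noncomputable def LamSubgroup (d : ℕ) (lam : Fin (d + d) → Fin d → ℂ) : AddSubgroup (Fin d → ℂ) :=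
  AddSubgroup.closure (Set.range lam)

/-- The lattice `Λ_c := c(2πi ℤ^{2d})`, as an additive subgroup of `ℂ^d`. -/
noncomputable def LamC (d : ℕ) (lam : Fin (d + d) → Fin d → ℂ) : AddSubgroup (Fin d → ℂ) :=
  AddSubgroup.closure
    {z : Fin d → ℂ | ∃ n : Fin (d + d) → ℤ,
      z = cmap d lam (fun k => 2 * Real.pi * Complex.I * (n k : ℂ))}

/-!
A character of the free abelian group `Λ` on the `λ_k` is determined by its values on the
generators, which can be prescribed freely: `t ∈ ℝ^{2d}` gives `∑ nₖ λₖ ↦ exp (i ∑ nₖ tₖ)`, and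
this is a surjection `ℝ^{2d} → Hom(Λ, U(1))` with kernel `2πℤ^{2d}`. Since the `λ_k` are
`ℝ`-independent, `A_Λ` is invertible and `t ↦ c(i t)` is an `ℝ`-linear isomorphism
`ℝ^{2d} ≃ ℂ^d` carrying `2πℤ^{2d}` onto `Λ_c`. As `c(s)` only depends on `Im s`, the map
`ρ ↦ [c(s)]` is the composite `Hom(Λ, U(1)) ≃ ℝ^{2d} / 2πℤ^{2d} ≃ ℂ^d / Λ_c`.
-/

open Complex

theorem AddChar.ext_closure {A M : Type*} [AddGroup A] [Monoid M] {s : Set A}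
    {ψ₁ ψ₂ : AddChar (AddSubgroup.closure s) M}
    (h : ∀ x (hx : x ∈ s), ψ₁ ⟨x, AddSubgroup.subset_closure hx⟩ =
      ψ₂ ⟨x, AddSubgroup.subset_closure hx⟩) :
    ψ₁ = ψ₂ :=
  AddChar.toAddMonoidHomEquiv.injective <|
    AddMonoidHom.eq_of_eqOn_dense AddSubgroup.closure_closure_coe_preimage
      fun x hx => h x hx

theorem mem_span_int_of_mem_closure {V : Type*} [AddCommGroup V] {s : Set V} {x : V}
    (hx : x ∈ AddSubgroup.closure s) : x ∈ Submodule.span ℤ s := by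
  rwa [← Submodule.span_int_eq_addSubgroupClosure] at hx

section LatticeChar

variable {V ι : Type*} [AddCommGroup V] {v : ι → V} (hv : LinearIndependent ℤ v)

/-- The character `∑ nₖ vₖ ↦ exp (i ∑ nₖ tₖ)` of the free abelian group on `v`. -/
noncomputable def latticeChar :
    (ι → ℝ) →+ Additive (AddChar (AddSubgroup.closure (Set.range v)) Circle) where
  toFun t := Additive.ofMul
    { toFun := fun x =>
        Circle.exp ((Module.Basis.span hv).constr ℤ t ⟨x, mem_span_int_of_mem_closure x.2⟩)
      map_zero_eq_one' := by
        rw [← Circle.exp_zero, ← map_zero ((Module.Basis.span hv).constr ℤ t)]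
        rfl
      map_add_eq_mul' := fun x y => by
        rw [← Circle.exp_add, ← map_add]
        rfl }
  map_zero' := by ext; simp
  map_add' t t' := by ext; simp [Circle.exp_add]

theorem latticeChar_apply_gen (t : ι → ℝ) (k : ι) :
    Additive.toMul (latticeChar hv t) ⟨v k, AddSubgroup.subset_closure (Set.mem_range_self k)⟩ =
      Circle.exp (t k) := by
  change Circle.exp ((Module.Basis.span hv).constr ℤ t ⟨v k, _⟩) = _
  rw [← Module.Basis.span_apply hv, Module.Basis.constr_basis]

theorem latticeChar_eq_ofMul_iff (t : ι → ℝ)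
    (ψ : AddChar (AddSubgroup.closure (Set.range v)) Circle) :
    latticeChar hv t = Additive.ofMul ψ ↔
      ∀ k, ψ ⟨v k, AddSubgroup.subset_closure (Set.mem_range_self k)⟩ = Circle.exp (t k) := by
  refine ⟨fun h k => by rw [← latticeChar_apply_gen hv, h, toMul_ofMul], fun h => ?_⟩
  rw [← ofMul_toMul (latticeChar hv t), EmbeddingLike.apply_eq_iff_eq]
  refine AddChar.ext_closure ?_
  rintro _ ⟨k, rfl⟩
  exact (latticeChar_apply_gen hv t k).trans (h k).symm

theorem latticeChar_surjective : Function.Surjective (latticeChar hv) := fun ψ =>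
  ⟨fun k => arg (Additive.toMul ψ ⟨v k, AddSubgroup.subset_closure (Set.mem_range_self k)⟩),
    (latticeChar_eq_ofMul_iff hv _ _).2 fun _ => (Circle.exp_arg _).symm⟩

theorem mem_ker_latticeChar {t : ι → ℝ} :
    t ∈ (latticeChar hv).ker ↔ ∀ k, ∃ n : ℤ, t k = n * (2 * Real.pi) := by
  simp only [AddMonoidHom.mem_ker, ← ofMul_one, latticeChar_eq_ofMul_iff, AddChar.one_apply,
    eq_comm (a := (1 : Circle)), Circle.exp_eq_one]

end LatticeChar

section CMap

variable (d : ℕ) (lam : Fin (d + d) → Fin d → ℂ)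

noncomputable def realify : (Fin d → ℂ) ≃ₗ[ℝ] (Fin (d + d) → ℝ) where
  toFun z := Fin.append (fun i => (z i).re) (fun i => (z i).im)
  invFun x i := ⟨x (Fin.castAdd d i), x (Fin.natAdd d i)⟩
  map_add' z w := by
    ext k
    induction k using Fin.addCases <;> simp [-Fin.natAdd_eq_addNat]
  map_smul' r z := by
    ext k
    induction k using Fin.addCases <;> simp [-Fin.natAdd_eq_addNat]
  left_inv z := by
    funext i
    simp [-Fin.natAdd_eq_addNat]
  right_inv x := by
    ext k
    induction k using Fin.addCases <;> simp [-Fin.natAdd_eq_addNat]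

theorem row_AΛ : (AΛ d lam).row = realify d ∘ lam := rfl

theorem isUnit_AΛ (hlam : LinearIndependent ℝ lam) : IsUnit (AΛ d lam) := by
  rw [← Matrix.linearIndependent_rows_iff_isUnit, row_AΛ]
  exact hlam.map' _ (realify d).ker

theorem Bmap_eq (x : Fin (d + d) → ℝ) : Bmap d x = (1 / 2 : ℂ) • (realify d).symm x := by
  ext j
  simp [Bmap, realify, Complex.mk_eq_add_mul_I, -Fin.natAdd_eq_addNat]
  ring

variable (hlam : LinearIndependent ℝ lam)

/-- `t ↦ c(i t)`. -/
noncomputable def cmapEquiv : (Fin (d + d) → ℝ) ≃ₗ[ℝ] (Fin d → ℂ) :=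
  (AΛ d lam)⁻¹.toLinearEquiv'
      (Matrix.isUnit_nonsing_inv_iff.2 (isUnit_AΛ d lam hlam)).invertible ≪≫ₗ (realify d).symm ≪≫ₗ
    (LinearEquiv.smulOfNeZero ℂ (Fin d → ℂ) (I / 2) (by simp)).restrictScalars ℝ

theorem cmap_eq_cmapEquiv_im (s : Fin (d + d) → ℂ) :
    cmap d lam s = cmapEquiv d lam hlam fun k => (s k).im := by
  have him : (fun k => (-I * s k).re) = fun k => (s k).im := funext fun k => by simp
  ext j
  simp only [cmap, him, Bmap_eq, cmapEquiv, LinearEquiv.trans_apply,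
    LinearEquiv.restrictScalars_apply, LinearEquiv.smulOfNeZero_apply, Pi.smul_apply, smul_eq_mul,
    one_div]
  rw [div_eq_mul_inv, mul_assoc]
  rfl

end CMap

theorem map_ker_latticeChar_eq_LamC (d : ℕ) (lam : Fin (d + d) → Fin d → ℂ)
    (hlam : LinearIndependent ℝ lam) :
    (latticeChar (hlam.restrict_scalars' ℤ)).ker.map
      ((cmapEquiv d lam hlam).toAddEquiv : (Fin (d + d) → ℝ) →+ (Fin d → ℂ)) = LamC d lam := by
  refine (AddSubgroup.closure_eq _).symm.trans (congrArg AddSubgroup.closure ?_)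
  ext z
  simp only [AddSubgroup.coe_map, Set.mem_image, SetLike.mem_coe, mem_ker_latticeChar,
    Set.mem_ofPred_eq, cmap_eq_cmapEquiv_im d lam hlam]
  constructor
  · rintro ⟨t, ht, rfl⟩
    choose n hn using ht
    refine ⟨n, congrArg _ (funext fun k => ?_)⟩
    simp [hn, mul_comm]
  · rintro ⟨n, rfl⟩
    exact ⟨_, fun k => ⟨n k, by simp [mul_comm]⟩, rfl⟩

theorem hom_to_quotient_iso_general (d : ℕ)
    (lam : Fin (d + d) → Fin d → ℂ)
    (hlam : LinearIndependent ℝ lam) :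
    ∃ Φ : Additive (AddChar (LamSubgroup d lam) Circle) ≃+
        ((Fin d → ℂ) ⧸ LamC d lam),
      ∀ (ρ : AddChar (LamSubgroup d lam) Circle) (s : Fin (d + d) → ℂ),
        (∀ k, (s k).re = 0) →
        (∀ k, Complex.exp (s k) =
          (ρ ⟨lam k, AddSubgroup.subset_closure (Set.mem_range_self k)⟩ : ℂ)) →
        Φ (Additive.ofMul ρ) = QuotientAddGroup.mk (cmap d lam s) := by
  let χ : (Fin (d + d) → ℝ) →+ Additive (AddChar (LamSubgroup d lam) Circle) :=
    latticeChar (hlam.restrict_scalars' ℤ)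
  refine ⟨(QuotientAddGroup.quotientKerEquivOfSurjective χ (latticeChar_surjective _)).symm.trans
    (QuotientAddGroup.congr _ _ (cmapEquiv d lam hlam).toAddEquiv
      (map_ker_latticeChar_eq_LamC d lam hlam)), fun ρ s hre hexp => ?_⟩
  have hρ : χ (fun k => (s k).im) = Additive.ofMul ρ :=
    (latticeChar_eq_ofMul_iff _ _ _).2 fun k => Subtype.ext <| (hexp k).symm.trans <| by
      rw [Circle.coe_exp]
      congr 1
      apply Complex.ext <;> simp [hre k]
  rw [← hρ, AddEquiv.trans_apply, cmap_eq_cmapEquiv_im d lam hlam]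
  exact congrArg (QuotientAddGroup.congr _ _ _ _)
    ((AddEquiv.symm_apply_eq _ (y := QuotientAddGroup.mk fun k => (s k).im)).2 rfl)

/-- The map sending a group homomorphism `ρ : Λ → U(1)` to the class of
`c(s)` in `ℂ^d / Λ_c`, where `s ∈ (iℝ)^{2d}` is any vector of purely imaginary complex
numbers with `exp(s_k) = ρ(λ_k)` for all `k`, is well defined and is an isomorphism of
abelian groups from `Hom(Λ, U(1))` onto `ℂ^d / Λ_c`. -/
theorem hom_to_quotient_iso (d : ℕ) (hd : 0 < d)
    (lam : Fin (d + d) → Fin d → ℂ)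
    (hlam : LinearIndependent ℝ lam)
    (hspan : Submodule.span ℝ (Set.range lam) = ⊤) :
    ∃ Φ : Additive (AddChar (LamSubgroup d lam) Circle) ≃+
        ((Fin d → ℂ) ⧸ LamC d lam),
      ∀ (ρ : AddChar (LamSubgroup d lam) Circle) (s : Fin (d + d) → ℂ),
        (∀ k, (s k).re = 0) →
        (∀ k, Complex.exp (s k) =
          (ρ ⟨lam k, AddSubgroup.subset_closure (Set.mem_range_self k)⟩ : ℂ)) →
        Φ (Additive.ofMul ρ) = QuotientAddGroup.mk (cmap d lam s) :=
  hom_to_quotient_iso_general d lam hlam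
end

section
/- The function f satisfies |f(z)| = 1 for every z ∈ ℂ^d, and f(z + λ) = ρ(λ) · f(z) for every z ∈ ℂ^d and every λ ∈ Λ. In particular, f descends to a nowhere-vanishing unit-modulus section of the flat line bundle on ℂ^d/Λ determined by the representation ρ. -/
/-- The function `f(z) := exp( −Σ_j conj(c_j) z_j + Σ_j c_j conj(z_j) )`. -/
noncomputable def sectionF (d : ℕ) (c : Fin d → ℂ) (z : Fin d → ℂ) : ℂ :=
  Complex.exp
    (-(∑ j : Fin d, (starRingEnd ℂ) (c j) * z j) +
      ∑ j : Fin d, c j * (starRingEnd ℂ) (z j))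

/-!
The exponent of `f` is `w - conj w = 2i·Im w` with `w = ∑ c_j conj z_j`, so `f = exp (i·φ)` for the
real-additive phase `φ(z) = 2 Im w`; hence `|f| = 1` and `f` is a character of `ℂ^d`. Writing
`c = i·B(u)`, one finds `φ(z) = ⟪(Re z, Im z), u⟫`, so `φ(λ_k) = (A_Λ u)_k = Im s_k` when
`u = A_Λ⁻¹(−i s)`, i.e. `f(λ_k) = exp(s_k) = ρ(λ_k)`. Two characters of `Λ` agreeing on its
generators agree, and `f(z + λ) = f(λ) f(z)`.
-/

open ComplexConjugate Matrix

theorem AddChar.apply_coe_closure_eq {A M : Type*} [AddGroup A] [DivisionMonoid M] {S : Set A}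
    (ψ : AddChar A M) (φ : AddChar (AddSubgroup.closure S) M)
    (h : ∀ a (ha : a ∈ S), ψ a = φ ⟨a, AddSubgroup.subset_closure ha⟩)
    (a : AddSubgroup.closure S) : ψ a = φ a := by
  obtain ⟨a, ha⟩ := a
  induction ha using AddSubgroup.closure_induction with
  | mem a ha => exact h a ha
  | zero => rw [map_zero_eq_one]; exact φ.map_zero_eq_one.symm
  | add a b _ _ iha ihb => rw [map_add_eq_mul, iha, ihb]; exact (φ.map_add_eq_mul _ _).symm
  | neg a _ iha => rw [map_neg_eq_inv, iha]; exact (φ.map_neg_eq_inv _).symm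

section

variable {d : ℕ}

noncomputable def phase (c : Fin d → ℂ) : (Fin d → ℂ) →+ ℝ :=
  AddMonoidHom.mk' (fun z => 2 * (∑ j, c j * conj (z j)).im) fun z w => by
    simp only [Pi.add_apply, map_add, mul_add, Finset.sum_add_distrib, Complex.add_im]

noncomputable def sectionChar (c : Fin d → ℂ) : AddChar (Fin d → ℂ) Circle :=
  Real.probChar.compAddMonoidHom (phase c)

theorem coe_sectionChar (c z : Fin d → ℂ) : (sectionChar c z : ℂ) = sectionF d c z := by
  have hconj : ∑ j, conj (c j) * z j = conj (∑ j, c j * conj (z j)) := by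
    simp [map_sum, mul_comm]
  rw [sectionF, hconj, neg_add_eq_sub, Complex.sub_conj]
  rfl

noncomputable def reImCoords : (Fin d → ℂ) →ₗ[ℝ] (Fin (d + d) → ℝ) where
  toFun z := Fin.append (fun j => (z j).re) (fun j => (z j).im)
  map_add' z w := by
    ext k
    refine Fin.addCases (fun j => ?_) (fun j => ?_) k <;>
      simp only [Pi.add_apply, Fin.append_left, Fin.append_right, Complex.add_re, Complex.add_im]
  map_smul' a z := by
    ext k
    refine Fin.addCases (fun j => ?_) (fun j => ?_) k <;>
      simp only [Pi.smul_apply, Fin.append_left, Fin.append_right, Complex.smul_re,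
        Complex.smul_im, RingHom.id_apply]

theorem reImCoords_injective : Function.Injective (reImCoords (d := d)) := by
  intro z w h
  funext j
  apply Complex.ext
  · simpa only [reImCoords, LinearMap.coe_mk, AddHom.coe_mk, Fin.append_left]
      using congrFun h (Fin.castAdd d j)
  · simpa only [reImCoords, LinearMap.coe_mk, AddHom.coe_mk, Fin.append_right]
      using congrFun h (Fin.natAdd d j)

theorem AΛ_apply (lam : Fin (d + d) → Fin d → ℂ) (k : Fin (d + d)) :
    AΛ d lam k = reImCoords (lam k) := rfl

theorem isUnit_det_AΛ {lam : Fin (d + d) → Fin d → ℂ} (hlam : LinearIndependent ℝ lam) :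
    IsUnit (AΛ d lam).det := by
  rw [← Matrix.isUnit_iff_isUnit_det, ← Matrix.linearIndependent_rows_iff_isUnit]
  exact hlam.map' reImCoords (LinearMap.ker_eq_bot.mpr reImCoords_injective)

theorem phase_I_mul_Bmap (u : Fin (d + d) → ℝ) (z : Fin d → ℂ) :
    phase (fun j => Complex.I * Bmap d u j) z = reImCoords z ⬝ᵥ u := by
  simp only [phase, AddMonoidHom.mk'_apply, dotProduct, Fin.sum_univ_add, reImCoords,
    LinearMap.coe_mk, AddHom.coe_mk, Fin.append_left, Fin.append_right, ← Finset.sum_add_distrib,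
    Complex.im_sum, Finset.mul_sum]
  refine Finset.sum_congr rfl fun j _ => ?_
  simp only [Bmap, Complex.mul_im, Complex.mul_re, Complex.div_re, Complex.div_im, Complex.add_re,
    Complex.add_im, Complex.I_re, Complex.I_im, Complex.ofReal_re, Complex.ofReal_im,
    Complex.conj_re, Complex.conj_im, Complex.normSq_ofNat, Complex.re_ofNat, Complex.im_ofNat]
  ring

theorem phase_cmap_apply {lam : Fin (d + d) → Fin d → ℂ} (hlam : LinearIndependent ℝ lam)
    (s : Fin (d + d) → ℂ) (k : Fin (d + d)) : phase (cmap d lam s) (lam k) = (s k).im := by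
  rw [show cmap d lam s = fun j => Complex.I * Bmap d _ j from rfl, phase_I_mul_Bmap,
    ← AΛ_apply, ← mulVec, mulVec_mulVec, mul_nonsing_inv _ (isUnit_det_AΛ hlam), one_mulVec]
  simp

theorem coe_sectionChar_cmap_apply {lam : Fin (d + d) → Fin d → ℂ}
    (hlam : LinearIndependent ℝ lam) {s : Fin (d + d) → ℂ} (hs : ∀ k, (s k).re = 0)
    (k : Fin (d + d)) : (sectionChar (cmap d lam s) (lam k) : ℂ) = Complex.exp (s k) := by
  rw [← Complex.re_add_im (s k), hs k, Complex.ofReal_zero, zero_add, ← Circle.coe_exp,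
    ← phase_cmap_apply hlam]
  rfl

end

theorem sectionF_unit_and_equivariant_general (d : ℕ)
    (lam : Fin (d + d) → Fin d → ℂ)
    (hlam : LinearIndependent ℝ lam)
    (ρ : AddChar (LamSubgroup d lam) Circle)
    (s : Fin (d + d) → ℂ) (hs : ∀ k, (s k).re = 0)
    (hρ : ∀ k, Complex.exp (s k) =
      (ρ ⟨lam k, AddSubgroup.subset_closure (Set.mem_range_self k)⟩ : ℂ)) :
    (∀ z : Fin d → ℂ, ‖sectionF d (cmap d lam s) z‖ = 1) ∧
    ∀ (z : Fin d → ℂ) (l : Fin d → ℂ) (hl : l ∈ LamSubgroup d lam),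
      sectionF d (cmap d lam s) (z + l) =
        (ρ ⟨l, hl⟩ : ℂ) * sectionF d (cmap d lam s) z := by
  set ψ := sectionChar (cmap d lam s)
  have hψρ : ∀ l (hl : l ∈ LamSubgroup d lam), ψ l = ρ ⟨l, hl⟩ := by
    refine fun l hl => ψ.apply_coe_closure_eq ρ ?_ ⟨l, hl⟩
    rintro _ ⟨k, rfl⟩
    exact Subtype.ext ((coe_sectionChar_cmap_apply hlam hs k).trans (hρ k))
  refine ⟨fun z => ?_, fun z l hl => ?_⟩
  · rw [← coe_sectionChar]
    exact Circle.norm_coe _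
  · rw [← coe_sectionChar, ← coe_sectionChar, AddChar.map_add_eq_mul, hψρ l hl, Circle.coe_mul,
      mul_comm]

/-- The function `f` satisfies `|f(z)| = 1` for every `z ∈ ℂ^d`, and
`f(z + λ) = ρ(λ)·f(z)` for every `z ∈ ℂ^d` and every `λ ∈ Λ`; thus `f` descends to a
nowhere-vanishing unit-modulus section of the flat line bundle determined by `ρ`. -/
theorem sectionF_unit_and_equivariant (d : ℕ) (hd : 0 < d)
    (lam : Fin (d + d) → Fin d → ℂ)
    (hlam : LinearIndependent ℝ lam)
    (hspan : Submodule.span ℝ (Set.range lam) = ⊤)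
    (ρ : AddChar (LamSubgroup d lam) Circle)
    (s : Fin (d + d) → ℂ) (hs : ∀ k, (s k).re = 0)
    (hρ : ∀ k, Complex.exp (s k) =
      (ρ ⟨lam k, AddSubgroup.subset_closure (Set.mem_range_self k)⟩ : ℂ)) :
    (∀ z : Fin d → ℂ, ‖sectionF d (cmap d lam s) z‖ = 1) ∧
    ∀ (z : Fin d → ℂ) (l : Fin d → ℂ) (hl : l ∈ LamSubgroup d lam),
      sectionF d (cmap d lam s) (z + l) =
        (ρ ⟨l, hl⟩ : ℂ) * sectionF d (cmap d lam s) z :=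
  sectionF_unit_and_equivariant_general d lam hlam ρ s hs hρ
end

section
/- Let n ≥ 1 and let p, q be integers with 0 ≤ p, q ≤ n. Let f¹, f² : {1, …, n} → ℂ, and let α¹, α² be complex-valued functions on the set of pairs (I, J) of subsets of {1, …, n} with |I| = p and |J| = q. Then Σ |f¹(m)| · |f²(m')| · |α¹(I, J)| · |α²(I, J')| ≤ n · binom(n, q) · ‖f¹‖ · ‖f²‖ · ‖α¹‖ · ‖α²‖, where the sum runs over all tuples (I, J, J', m, m') with I, J, J' subsets of {1, …, n}, |I| = p, |J| = |J'| = q, m, m' ∈ {1, …, n}, m ∉ J, m' ∉ J', and {m} ∪ J = {m'} ∪ J', and where ‖f^l‖² := Σ_{m=1}^n |f^l(m)|² and ‖α^l‖² := Σ_{|I|=p, |J|=q} |α^l(I, J)|². -/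
/-!
Write each summand as `(|f¹(m)| |α¹(I,J)|) · (|f²(m')| |α²(I,J')|)` and apply Cauchy–Schwarz over
the admissible tuples. A tuple is determined by `(I, J, m, m')`, because `J' = ({m} ∪ J) \ {m'}`,
so the first sum of squares is at most the sum over all `(I, J, m, m')`, which is
`n ‖f¹‖² ‖α¹‖²`; the second one is the same after exchanging `(J, m)` and `(J', m')`. This gives
the bound with the constant `n`, and `binom(n, q) ≥ 1`.
-/

open Finset

variable {n p q : ℕ}

def coeffIndex (n p q : ℕ) : Finset (Finset (Fin n) × Finset (Fin n)) :=
  univ.filter fun IJ => IJ.1.card = p ∧ IJ.2.card = q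

/-- The tuples `(I, J, J', m, m')` for which `dz̄_m ∧ dz_I ∧ dz̄_J` and `dz̄_m' ∧ dz_I ∧ dz̄_J'`
are, up to sign, the same basis form. -/
def wedgeIndex (n p q : ℕ) :
    Finset (Finset (Fin n) × Finset (Fin n) × Finset (Fin n) × Fin n × Fin n) :=
  univ.filter fun t => t.1.card = p ∧ t.2.1.card = q ∧ t.2.2.1.card = q ∧
    t.2.2.2.1 ∉ t.2.1 ∧ t.2.2.2.2 ∉ t.2.2.1 ∧ insert t.2.2.2.1 t.2.1 = insert t.2.2.2.2 t.2.2.1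

def wedgeSwap (t : Finset (Fin n) × Finset (Fin n) × Finset (Fin n) × Fin n × Fin n) :
    Finset (Fin n) × Finset (Fin n) × Finset (Fin n) × Fin n × Fin n :=
  (t.1, t.2.2.1, t.2.1, t.2.2.2.2, t.2.2.2.1)

lemma wedgeSwap_mem_wedgeIndex {t} (ht : t ∈ wedgeIndex n p q) :
    wedgeSwap t ∈ wedgeIndex n p q := by
  simp only [wedgeIndex, wedgeSwap, mem_filter, mem_univ, true_and] at ht ⊢
  obtain ⟨hI, hJ, hJ', hm, hm', h⟩ := ht
  exact ⟨hI, hJ', hJ, hm', hm, h.symm⟩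

lemma sum_wedgeIndex_wedgeSwap (F : _ → ℝ) :
    ∑ t ∈ wedgeIndex n p q, F (wedgeSwap t) = ∑ t ∈ wedgeIndex n p q, F t :=
  sum_nbij' wedgeSwap wedgeSwap (fun _ => wedgeSwap_mem_wedgeIndex)
    (fun _ => wedgeSwap_mem_wedgeIndex) (fun _ _ => rfl) (fun _ _ => rfl) (fun _ _ => rfl)

lemma wedgeIndex_injOn :
    Set.InjOn (fun t : Finset (Fin n) × Finset (Fin n) × Finset (Fin n) × Fin n × Fin n =>
      ((t.1, t.2.1), (t.2.2.2.1, t.2.2.2.2))) (wedgeIndex n p q) := by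
  rintro ⟨I, J, J', m, m'⟩ ht ⟨I₂, J₂, J₂', m₂, m₂'⟩ ht₂ heq
  simp only [wedgeIndex, coe_filter, mem_univ, true_and, Set.mem_ofPred_eq] at ht ht₂
  simp only [Prod.mk.injEq] at heq
  obtain ⟨⟨rfl, rfl⟩, rfl, rfl⟩ := heq
  have hJ' : J' = (insert m J).erase m' := by rw [ht.2.2.2.2.2, erase_insert ht.2.2.2.2.1]
  have hJ₂' : J₂' = (insert m J).erase m' := by rw [ht₂.2.2.2.2.2, erase_insert ht₂.2.2.2.2.1]
  rw [hJ', hJ₂']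

lemma sum_coeffIndex_prod_sq (x : Fin n → ℝ) (a : Finset (Fin n) → Finset (Fin n) → ℝ) :
    ∑ y ∈ coeffIndex n p q ×ˢ (univ : Finset (Fin n × Fin n)), (x y.2.1 * a y.1.1 y.1.2) ^ 2
      = n * ((∑ m, x m ^ 2) * ∑ IJ ∈ coeffIndex n p q, a IJ.1 IJ.2 ^ 2) := by
  simp [sum_product, mul_pow, ← sum_mul, ← mul_sum, Fintype.sum_prod_type, mul_comm,
    mul_left_comm]

lemma sum_wedgeIndex_sq_le (x : Fin n → ℝ) (a : Finset (Fin n) → Finset (Fin n) → ℝ) :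
    ∑ t ∈ wedgeIndex n p q, (x t.2.2.2.1 * a t.1 t.2.1) ^ 2
      ≤ n * ((∑ m, x m ^ 2) * ∑ IJ ∈ coeffIndex n p q, a IJ.1 IJ.2 ^ 2) := by
  rw [← sum_coeffIndex_prod_sq]
  calc ∑ t ∈ wedgeIndex n p q, (x t.2.2.2.1 * a t.1 t.2.1) ^ 2
      = ∑ y ∈ (wedgeIndex n p q).image fun t => ((t.1, t.2.1), (t.2.2.2.1, t.2.2.2.2)),
          (x y.2.1 * a y.1.1 y.1.2) ^ 2 := by
        rw [sum_image wedgeIndex_injOn]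
    _ ≤ _ := sum_le_sum_of_subset_of_nonneg ?_ fun _ _ _ => sq_nonneg _
  intro y hy
  obtain ⟨t, ht, rfl⟩ := mem_image.1 hy
  simp only [wedgeIndex, mem_filter, mem_univ, true_and] at ht
  simp [coeffIndex, ht.1, ht.2.1]

theorem sum_wedgeIndex_le (x y : Fin n → ℝ) (a b : Finset (Fin n) → Finset (Fin n) → ℝ) :
    ∑ t ∈ wedgeIndex n p q, x t.2.2.2.1 * y t.2.2.2.2 * a t.1 t.2.1 * b t.1 t.2.2.1
      ≤ n * (√(∑ m, x m ^ 2) * √(∑ m, y m ^ 2) *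
        √(∑ IJ ∈ coeffIndex n p q, a IJ.1 IJ.2 ^ 2) *
        √(∑ IJ ∈ coeffIndex n p q, b IJ.1 IJ.2 ^ 2)) := by
  have hxa := sum_wedgeIndex_sq_le (p := p) (q := q) x a
  have hyb := sum_wedgeIndex_sq_le (p := p) (q := q) y b
  rw [← sum_wedgeIndex_wedgeSwap] at hyb
  calc ∑ t ∈ wedgeIndex n p q, x t.2.2.2.1 * y t.2.2.2.2 * a t.1 t.2.1 * b t.1 t.2.2.1
      = ∑ t ∈ wedgeIndex n p q, (x t.2.2.2.1 * a t.1 t.2.1) * (y t.2.2.2.2 * b t.1 t.2.2.1) :=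
        sum_congr rfl fun _ _ => by ring
    _ ≤ √(∑ t ∈ wedgeIndex n p q, (x t.2.2.2.1 * a t.1 t.2.1) ^ 2) *
          √(∑ t ∈ wedgeIndex n p q, (y t.2.2.2.2 * b t.1 t.2.2.1) ^ 2) :=
        Real.sum_mul_le_sqrt_mul_sqrt _ _ _
    _ ≤ √(n * ((∑ m, x m ^ 2) * ∑ IJ ∈ coeffIndex n p q, a IJ.1 IJ.2 ^ 2)) *
          √(n * ((∑ m, y m ^ 2) * ∑ IJ ∈ coeffIndex n p q, b IJ.1 IJ.2 ^ 2)) := by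
        gcongr
        exact hyb
    _ = _ := by
        have hn : √(n : ℝ) * √(n : ℝ) = n := Real.mul_self_sqrt (Nat.cast_nonneg n)
        simp only [Real.sqrt_mul (Nat.cast_nonneg _),
          Real.sqrt_mul (sum_nonneg fun _ _ => sq_nonneg _)]
        linear_combination (√(∑ m, x m ^ 2) * √(∑ m, y m ^ 2) *
          √(∑ IJ ∈ coeffIndex n p q, a IJ.1 IJ.2 ^ 2) *
          √(∑ IJ ∈ coeffIndex n p q, b IJ.1 IJ.2 ^ 2)) * hn

theorem coefficient_wedge_estimate_general (n p q : ℕ) (hq : q ≤ n)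
    (f1 f2 : Fin n → ℂ)
    (a1 a2 : Finset (Fin n) → Finset (Fin n) → ℂ) :
    ∑ t ∈ Finset.univ.filter
        (fun t : Finset (Fin n) × Finset (Fin n) × Finset (Fin n) × Fin n × Fin n =>
          t.1.card = p ∧ t.2.1.card = q ∧ t.2.2.1.card = q ∧
          t.2.2.2.1 ∉ t.2.1 ∧ t.2.2.2.2 ∉ t.2.2.1 ∧
          insert t.2.2.2.1 t.2.1 = insert t.2.2.2.2 t.2.2.1),
        (‖f1 t.2.2.2.1‖ * ‖f2 t.2.2.2.2‖ *
          ‖a1 t.1 t.2.1‖ * ‖a2 t.1 t.2.2.1‖)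
    ≤ (n : ℝ) * (n.choose q : ℝ) *
      Real.sqrt (∑ m : Fin n, ‖f1 m‖ ^ 2) *
      Real.sqrt (∑ m : Fin n, ‖f2 m‖ ^ 2) *
      Real.sqrt (∑ IJ ∈ Finset.univ.filter
          (fun IJ : Finset (Fin n) × Finset (Fin n) => IJ.1.card = p ∧ IJ.2.card = q),
        ‖a1 IJ.1 IJ.2‖ ^ 2) *
      Real.sqrt (∑ IJ ∈ Finset.univ.filter
          (fun IJ : Finset (Fin n) × Finset (Fin n) => IJ.1.card = p ∧ IJ.2.card = q),
        ‖a2 IJ.1 IJ.2‖ ^ 2) := by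
  have hchoose : (1 : ℝ) ≤ n.choose q := Nat.one_le_cast.mpr (Nat.choose_pos hq)
  have hsharp := sum_wedgeIndex_le (p := p) (q := q) (‖f1 ·‖) (‖f2 ·‖) (‖a1 · ·‖) (‖a2 · ·‖)
  unfold wedgeIndex coeffIndex at hsharp
  refine hsharp.trans (le_of_le_of_eq (le_mul_of_one_le_right (by positivity) hchoose) (by ring))

/-- The coefficient-level Cauchy–Schwarz estimate behind the pointwise
bound `|⟨η₁ ∧ α₁, η₂ ∧ α₂⟩_ω| ≤ n·C(n,q)·‖η₁‖‖η₂‖‖α₁‖‖α₂‖` for `(0,1)`-forms `η` and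
`(p,q)`-forms `α` on an `n`-dimensional Kähler manifold. -/
theorem coefficient_wedge_estimate (n p q : ℕ) (hn : 1 ≤ n) (hp : p ≤ n) (hq : q ≤ n)
    (f1 f2 : Fin n → ℂ)
    (a1 a2 : Finset (Fin n) → Finset (Fin n) → ℂ) :
    ∑ t ∈ Finset.univ.filter
        (fun t : Finset (Fin n) × Finset (Fin n) × Finset (Fin n) × Fin n × Fin n =>
          t.1.card = p ∧ t.2.1.card = q ∧ t.2.2.1.card = q ∧
          t.2.2.2.1 ∉ t.2.1 ∧ t.2.2.2.2 ∉ t.2.2.1 ∧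
          insert t.2.2.2.1 t.2.1 = insert t.2.2.2.2 t.2.2.1),
        (‖f1 t.2.2.2.1‖ * ‖f2 t.2.2.2.2‖ *
          ‖a1 t.1 t.2.1‖ * ‖a2 t.1 t.2.2.1‖)
    ≤ (n : ℝ) * (n.choose q : ℝ) *
      Real.sqrt (∑ m : Fin n, ‖f1 m‖ ^ 2) *
      Real.sqrt (∑ m : Fin n, ‖f2 m‖ ^ 2) *
      Real.sqrt (∑ IJ ∈ Finset.univ.filter
          (fun IJ : Finset (Fin n) × Finset (Fin n) => IJ.1.card = p ∧ IJ.2.card = q),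
        ‖a1 IJ.1 IJ.2‖ ^ 2) *
      Real.sqrt (∑ IJ ∈ Finset.univ.filter
          (fun IJ : Finset (Fin n) × Finset (Fin n) => IJ.1.card = p ∧ IJ.2.card = q),
        ‖a2 IJ.1 IJ.2‖ ^ 2) :=
  coefficient_wedge_estimate_general n p q hq f1 f2 a1 a2
end
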